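/- Let A be the chain complex of F2[U]-modules freely generated over F2[U] by s4 := U^3 x_{-4}, s3 := U^2 x_{-3}, x_0, x_3, x_4, with ∂x_0 = s3 + x_3, ∂s4 = U·s3, ∂x_4 = Ux_3, ∂s3 = ∂x_3 = 0, gradings M(s4) = 0, M(s3) = 1, M(x_0) = 2, M(x_3) = 1, M(x_4) = 0 (U lowers M by 2), and involution ι(x_0) = x_0, ι(x_3) = s3, ι(s3) = x_3, ι(x_4) = s4, ι(s4) = x_4. (A is the staircase summand of A_0^-(10_161), which is ι-invariant; the complementary box summand is ι-invariant with acyclic mapping cone.) Let AI be the mapping cone of Q(ι + Id): A → Q·A, with differential D(ξ + Qη) = ∂ξ + Q(ι(ξ) + ξ + ∂η) and grading gr(ξ) = M(ξ) + 1, gr(Qη) = M(η). Then H(AI) ≅ F2[U]·[x_3 + Qx_0] ⊕ F2[U]·[Ux_0 + x_4 + s4] ⊕ F2·[Qx_3], where [x_3 + Qx_0] (grading 2) and [Ux_0 + x_4 + s4] (grading 1) generate free F2[U]-summands with U·[x_3 + Qx_0] = Q·[Ux_0 + x_4 + s4], and [Qx_3] is a U-torsion class in grading 1. Consequently V̲_0(10_161)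 = -(1/2)(1 - 1) = 0 and V̄_0(10_161) = -(1/2)(2) = -1. -/

import Mathlib

/- STATEMENT 16: let A be the staircase summand of A_0^-(10_161), free over
F2[U] on s4 = U³x₋₄, s3 = U²x₋₃, x₀, x₃, x₄ with ∂x₀ = s3 + x₃,
∂s4 = U·s3, ∂x₄ = Ux₃, gradings M(s4) = 0, M(s3) = 1, M(x₀) = 2,
M(x₃) = 1, M(x₄) = 0, and involution ι(x₀) = x₀, ι(x₃) = s3, ι(s3) = x₃,
ι(x₄) = s4, ι(s4) = x₄.  The mapping cone AI of Q(ι + Id) : A → Q·A has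
homology F2[U]·[x₃ + Qx₀] ⊕ F2[U]·[Ux₀ + x₄ + s4] ⊕ F2·[Qx₃], with
U·[x₃ + Qx₀] = Q·[Ux₀ + x₄ + s4] and [Qx₃] U-torsion of grading 1;
consequently V̲_0(10_161) = 0 and V̄_0(10_161) = -1. -/

open Polynomial

noncomputable section

/-- F2[U] -/
abbrev R2 : Type := Polynomial (ZMod 2)

/-- the variable U -/
def UU : R2 := Polynomial.X

/-- the i-th free generator -/
def gen {n : ℕ} (i : Fin n) : Fin n → R2 := Pi.single i 1

/-- the F2[U]-linear map sending the i-th generator to `v i` -/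
def mkD {n : ℕ} (v : Fin n → (Fin n → R2)) : (Fin n → R2) →ₗ[R2] (Fin n → R2) :=
  (Pi.basisFun R2 (Fin n)).constr ℕ v

/-- `x` is homogeneous of degree `r` -/
def Homog {n : ℕ} (M : Fin n → ℤ) (r : ℤ) (x : Fin n → R2) : Prop :=
  ∀ i : Fin n, ∀ k : ℕ, (x i).coeff k ≠ 0 → M i - 2 * (k : ℤ) = r

/- generators of AI: s4 = 0, s3 = 1, x₀ = 2, x₃ = 3, x₄ = 4, and the
   Q-copies Qs4 = 5, Qs3 = 6, Qx₀ = 7, Qx₃ = 8, Qx₄ = 9.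
   D(ξ) = ∂ξ + Q(ι(ξ) + ξ), D(Qη) = Q(∂η). -/

/-- the differential D of the mapping cone AI -/
def D : (Fin 10 → R2) →ₗ[R2] (Fin 10 → R2) :=
  mkD ![UU • gen 1 + gen 9 + gen 5,   -- D s4 = U·s3 + Q(x₄ + s4)
        gen 8 + gen 6,                -- D s3 = Q(x₃ + s3)
        gen 1 + gen 3,                -- D x₀ = s3 + x₃
        gen 6 + gen 8,                -- D x₃ = Q(s3 + x₃)
        UU • gen 3 + gen 5 + gen 9,   -- D x₄ = Ux₃ + Q(s4 + x₄)
        UU • gen 6,                   -- D Qs4 = Q(U·s3)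
        0,                            -- D Qs3 = 0
        gen 6 + gen 8,                -- D Qx₀ = Q(s3 + x₃)
        0,                            -- D Qx₃ = 0
        UU • gen 8]                   -- D Qx₄ = Q(Ux₃)

/-- the action of Q -/
def Qm : (Fin 10 → R2) →ₗ[R2] (Fin 10 → R2) :=
  mkD ![gen 5, gen 6, gen 7, gen 8, gen 9, 0, 0, 0, 0, 0]

/-- gradings gr(ξ) = M(ξ) + 1, gr(Qη) = M(η) -/
def gr : Fin 10 → ℤ := ![1, 2, 3, 2, 1, 0, 1, 2, 1, 0]

/-! ### Auxiliary lemmas -/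

set_option maxHeartbeats 1000000

lemma sum_ten {M : Type*} [AddCommMonoid M] (f : Fin 10 → M) :
    ∑ i, f i = f 0 + f 1 + f 2 + f 3 + f 4 + f 5 + f 6 + f 7 + f 8 + f 9 := by
  simp [Fin.sum_univ_castSucc, Fin.sum_univ_eight]

section evals
variable {α : Type*} (a0 a1 a2 a3 a4 a5 a6 a7 a8 a9 : α)
lemma v10_0 : ![a0,a1,a2,a3,a4,a5,a6,a7,a8,a9] (0:Fin 10) = a0 := rfl
lemma v10_1 : ![a0,a1,a2,a3,a4,a5,a6,a7,a8,a9] (1:Fin 10) = a1 := rfl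
lemma v10_2 : ![a0,a1,a2,a3,a4,a5,a6,a7,a8,a9] (2:Fin 10) = a2 := rfl
lemma v10_3 : ![a0,a1,a2,a3,a4,a5,a6,a7,a8,a9] (3:Fin 10) = a3 := rfl
lemma v10_4 : ![a0,a1,a2,a3,a4,a5,a6,a7,a8,a9] (4:Fin 10) = a4 := rfl
lemma v10_5 : ![a0,a1,a2,a3,a4,a5,a6,a7,a8,a9] (5:Fin 10) = a5 := rfl
lemma v10_6 : ![a0,a1,a2,a3,a4,a5,a6,a7,a8,a9] (6:Fin 10) = a6 := rfl
lemma v10_7 : ![a0,a1,a2,a3,a4,a5,a6,a7,a8,a9] (7:Fin 10) = a7 := rfl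
lemma v10_8 : ![a0,a1,a2,a3,a4,a5,a6,a7,a8,a9] (8:Fin 10) = a8 := rfl
lemma v10_9 : ![a0,a1,a2,a3,a4,a5,a6,a7,a8,a9] (9:Fin 10) = a9 := rfl
end evals

lemma gen_apply {n : ℕ} (i j : Fin n) : gen i j = if j = i then 1 else 0 := by
  simp [gen, Pi.single_apply]

lemma mkD_apply {n : ℕ} (v : Fin n → (Fin n → R2)) (z : Fin n → R2) :
    mkD v z = ∑ i, z i • v i := by
  simp [mkD, Module.Basis.constr_apply_fintype]

lemma two_zero : (2 : R2) = 0 := by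
  rw [← map_ofNat (Polynomial.C : ZMod 2 →+* R2) 2,
    show (OfNat.ofNat 2 : ZMod 2) = 0 from rfl, map_zero]

lemma X_ne : (UU : R2) ≠ 0 := by simpa [UU] using (Polynomial.X_ne_zero : (X : R2) ≠ 0)

lemma two_zero' : (2 : ZMod 2) = 0 := rfl

lemma add_self' (a : R2) : a + a = 0 := by linear_combination a * two_zero

lemma add_eq (a b : R2) (h : a + b = 0) : a = b := by linear_combination h - b * two_zero

lemma zmod2_ne (a b : ZMod 2) (h : a ≠ b) : b = a + 1 := by revert a b; decide

lemma zmod2_solve (a b c : ZMod 2) (h : a + (b + c) = 0) : c = a + b := by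
  revert a b c; decide

lemma zmod2_aa1 (a : ZMod 2) : a + (a + 1) = 1 := by revert a; decide

lemma poly_exists_coeff (p : R2) (h : p ≠ 0) : ∃ k, p.coeff k ≠ 0 := by
  by_contra hc; push_neg at hc; exact h (Polynomial.ext fun k => by simp [hc k])

lemma D_apply (z : Fin 10 → R2) : D z =
    ![0, UU * z 0 + z 2, 0, z 2 + UU * z 4, 0, z 0 + z 4,
      z 1 + z 3 + UU * z 5 + z 7, 0, z 1 + z 3 + z 7 + UU * z 9, z 0 + z 4] := by
  rw [D, mkD_apply, sum_ten]
  simp only [v10_0, v10_1, v10_2, v10_3, v10_4, v10_5, v10_6, v10_7, v10_8, v10_9]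
  funext j
  fin_cases j <;>
    simp only [Pi.add_apply, Pi.smul_apply, Pi.zero_apply, gen_apply, smul_eq_mul,
      v10_0, v10_1, v10_2, v10_3, v10_4, v10_5, v10_6, v10_7, v10_8, v10_9] <;>
    simp (config := { decide := true }) [UU, v10_0, v10_1, v10_2, v10_3, v10_4, v10_5,
      v10_6, v10_7, v10_8, v10_9] <;> try ring

lemma Qm_apply (z : Fin 10 → R2) : Qm z =
    ![0, 0, 0, 0, 0, z 0, z 1, z 2, z 3, z 4] := by
  rw [Qm, mkD_apply, sum_ten]
  simp only [v10_0, v10_1, v10_2, v10_3, v10_4, v10_5, v10_6, v10_7, v10_8, v10_9]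
  funext j
  fin_cases j <;>
    simp only [Pi.add_apply, Pi.smul_apply, Pi.zero_apply, gen_apply, smul_eq_mul,
      v10_0, v10_1, v10_2, v10_3, v10_4, v10_5, v10_6, v10_7, v10_8, v10_9] <;>
    simp (config := { decide := true }) [v10_0, v10_1, v10_2, v10_3, v10_4, v10_5,
      v10_6, v10_7, v10_8, v10_9]

lemma D_eq_zero_iff (z : Fin 10 → R2) :
    D z = 0 ↔ z 4 = z 0 ∧ z 2 = UU * z 0 ∧ z 9 = z 5 ∧ z 7 = z 1 + z 3 + UU * z 5 := by
  rw [D_apply]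
  constructor
  · intro h
    have h1 : UU * z 0 + z 2 = 0 := congrFun h 1
    have h5 : z 0 + z 4 = 0 := congrFun h 5
    have h6 : z 1 + z 3 + UU * z 5 + z 7 = 0 := congrFun h 6
    have h8 : z 1 + z 3 + z 7 + UU * z 9 = 0 := congrFun h 8
    refine ⟨?_, ?_, ?_, ?_⟩
    · linear_combination h5 - z 0 * two_zero
    · linear_combination h1 - UU * z 0 * two_zero
    · have hc : UU * z 5 = UU * z 9 := by linear_combination h6 - h8
      exact (mul_left_cancel₀ X_ne hc).symm
    · linear_combination h6 - (z 1 + z 3 + UU * z 5) * two_zero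
  · rintro ⟨h4, h2, h9, h7⟩
    funext j
    fin_cases j
    · rfl
    · show UU * z 0 + z 2 = 0
      linear_combination h2 + UU * z 0 * two_zero
    · rfl
    · show z 2 + UU * z 4 = 0
      linear_combination h2 + UU * h4 + UU * z 0 * two_zero
    · rfl
    · show z 0 + z 4 = 0
      linear_combination h4 + z 0 * two_zero
    · show z 1 + z 3 + UU * z 5 + z 7 = 0
      linear_combination h7 + (z 1 + z 3 + UU * z 5) * two_zero
    · rfl
    · show z 1 + z 3 + z 7 + UU * z 9 = 0
      linear_combination h7 + UU * h9 + (z 1 + z 3 + UU * z 5) * two_zero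
    · show z 0 + z 4 = 0
      linear_combination h4 + z 0 * two_zero

lemma mem_range_D (w : Fin 10 → R2) :
    w ∈ LinearMap.range D ↔ w 0 = 0 ∧ w 2 = 0 ∧ w 4 = 0 ∧ w 7 = 0 ∧ w 9 = w 5 ∧
      w 3 = w 1 + UU * w 5 ∧ (w 6 + w 8).coeff 0 = 0 := by
  constructor
  · rintro ⟨z, rfl⟩
    rw [D_apply]
    refine ⟨rfl, rfl, rfl, rfl, rfl, ?_, ?_⟩
    · show z 2 + UU * z 4 = (UU * z 0 + z 2) + UU * (z 0 + z 4)
      linear_combination (-(UU * z 0)) * two_zero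
    · show ((z 1 + z 3 + UU * z 5 + z 7) + (z 1 + z 3 + z 7 + UU * z 9)).coeff 0 = 0
      have e5 : (UU * z 5).coeff 0 = 0 := by
        rw [UU, Polynomial.mul_coeff_zero, Polynomial.coeff_X_zero, zero_mul]
      have e9 : (UU * z 9).coeff 0 = 0 := by
        rw [UU, Polynomial.mul_coeff_zero, Polynomial.coeff_X_zero, zero_mul]
      simp only [Polynomial.coeff_add, e5, e9, add_zero]
      linear_combination ((z 1).coeff 0 + (z 3).coeff 0 + (z 7).coeff 0) * two_zero'
  · rintro ⟨h0, h2, h4, h7, h9, h3, h68⟩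
    refine ⟨![0, 0, w 1, w 6, w 5, 0, 0, 0, 0, (w 6 + w 8).divX], ?_⟩
    have hdiv : UU * (w 6 + w 8).divX = w 6 + w 8 := by
      conv_rhs => rw [← Polynomial.X_mul_divX_add (w 6 + w 8)]
      rw [h68, map_zero, add_zero, UU]
    rw [D_apply]
    funext j
    fin_cases j
    · exact h0.symm
    · show UU * 0 + w 1 = w 1; ring
    · exact h2.symm
    · show w 1 + UU * w 5 = w 3; exact h3.symm
    · exact h4.symm
    · show (0 : R2) + w 5 = w 5; ring
    · show (0 : R2) + w 6 + UU * 0 + 0 = w 6; ring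
    · exact h7.symm
    · show (0 : R2) + w 6 + 0 + UU * (w 6 + w 8).divX = w 8
      rw [hdiv]
      linear_combination w 6 * two_zero
    · show (0 : R2) + w 5 = w 9
      rw [h9]; ring

lemma E_coords (z : Fin 10 → R2) (t1 t2 : R2) (t3 : ZMod 2) :
    z + t1 • (gen 3 + gen 7) + t2 • (UU • gen 2 + gen 4 + gen 0)
      + (Polynomial.C t3) • gen 8 =
    ![z 0 + t2, z 1, z 2 + t2 * UU, z 3 + t1, z 4 + t2, z 5, z 6, z 7 + t1,
      z 8 + Polynomial.C t3, z 9] := by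
  funext j
  fin_cases j
  · show z 0 + t1 * (0 + 0) + t2 * (UU * 0 + 0 + 1) + Polynomial.C t3 * 0 = z 0 + t2; ring
  · show z 1 + t1 * (0 + 0) + t2 * (UU * 0 + 0 + 0) + Polynomial.C t3 * 0 = z 1; ring
  · show z 2 + t1 * (0 + 0) + t2 * (UU * 1 + 0 + 0) + Polynomial.C t3 * 0 = z 2 + t2 * UU; ring
  · show z 3 + t1 * (1 + 0) + t2 * (UU * 0 + 0 + 0) + Polynomial.C t3 * 0 = z 3 + t1; ring
  · show z 4 + t1 * (0 + 0) + t2 * (UU * 0 + 1 + 0) + Polynomial.C t3 * 0 = z 4 + t2; ring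
  · show z 5 + t1 * (0 + 0) + t2 * (UU * 0 + 0 + 0) + Polynomial.C t3 * 0 = z 5; ring
  · show z 6 + t1 * (0 + 0) + t2 * (UU * 0 + 0 + 0) + Polynomial.C t3 * 0 = z 6; ring
  · show z 7 + t1 * (0 + 1) + t2 * (UU * 0 + 0 + 0) + Polynomial.C t3 * 0 = z 7 + t1; ring
  · show z 8 + t1 * (0 + 0) + t2 * (UU * 0 + 0 + 0) + Polynomial.C t3 * 1
        = z 8 + Polynomial.C t3; ring
  · show z 9 + t1 * (0 + 0) + t2 * (UU * 0 + 0 + 0) + Polynomial.C t3 * 0 = z 9; ring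

lemma QmB : Qm (UU • gen 2 + gen 4 + gen 0) = ![0,0,0,0,0,1,0,UU,0,1] := by
  have h0 : (UU • gen 2 + gen 4 + gen 0 : Fin 10 → R2) 0 = 1 := by show UU * 0 + 0 + 1 = 1; ring
  have h1 : (UU • gen 2 + gen 4 + gen 0 : Fin 10 → R2) 1 = 0 := by show UU * 0 + 0 + 0 = 0; ring
  have h2 : (UU • gen 2 + gen 4 + gen 0 : Fin 10 → R2) 2 = UU := by show UU * 1 + 0 + 0 = UU; ring
  have h3 : (UU • gen 2 + gen 4 + gen 0 : Fin 10 → R2) 3 = 0 := by show UU * 0 + 0 + 0 = 0; ring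
  have h4 : (UU • gen 2 + gen 4 + gen 0 : Fin 10 → R2) 4 = 1 := by show UU * 0 + 1 + 0 = 1; ring
  rw [Qm_apply, h0, h1, h2, h3, h4]

/-- a homogeneous cycle of grading ≥ 3 vanishes -/
lemma high_grading_zero (r : ℤ) (z : Fin 10 → R2) (hz : D z = 0) (hH : Homog gr r z)
    (hr : 3 ≤ r) : z = 0 := by
  rw [D_eq_zero_iff] at hz
  have key : ∀ i : Fin 10, gr i ≤ 2 → z i = 0 := by
    intro i hgi
    by_contra hne
    obtain ⟨k, hk⟩ := poly_exists_coeff _ hne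
    have h := hH i k hk
    omega
  have g0 : z 0 = 0 := key 0 (by norm_num [gr, v10_0])
  funext i
  fin_cases i
  · exact g0
  · exact key 1 (by norm_num [gr, v10_1])
  · show z 2 = 0; rw [hz.2.1, g0, mul_zero]
  · exact key 3 (by norm_num [gr, v10_3])
  · exact key 4 (by norm_num [gr, v10_4])
  · exact key 5 (by norm_num [gr, v10_5])
  · exact key 6 (by norm_num [gr, v10_6])
  · exact key 7 (by norm_num [gr, v10_7])
  · exact key 8 (by norm_num [gr, v10_8])
  · exact key 9 (by norm_num [gr, v10_9])

theorem stmt_16 :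
    -- AI is a chain complex
    D ∘ₗ D = 0 ∧
    -- x₃ + Qx₀ is a cycle, homogeneous of grading 2
    D (gen 3 + gen 7) = 0 ∧ Homog gr 2 (gen 3 + gen 7) ∧
    -- Ux₀ + x₄ + s4 is a cycle, homogeneous of grading 1
    D (UU • gen 2 + gen 4 + gen 0) = 0 ∧
    Homog gr 1 (UU • gen 2 + gen 4 + gen 0) ∧
    -- Qx₃ is a cycle, homogeneous of grading 1
    D (gen 8) = 0 ∧ Homog gr 1 (gen 8) ∧
    -- [Qx₃] is U-torsion: U·[Qx₃] = 0
    UU • gen 8 ∈ LinearMap.range D ∧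
    -- U·[x₃ + Qx₀] = Q·[Ux₀ + x₄ + s4]
    UU • (gen 3 + gen 7) + Qm (UU • gen 2 + gen 4 + gen 0)
      ∈ LinearMap.range D ∧
    -- H(AI) ≅ F2[U]·[x₃ + Qx₀] ⊕ F2[U]·[Ux₀ + x₄ + s4] ⊕ F2·[Qx₃]
    (∀ z : Fin 10 → R2, D z = 0 →
      ∃! t : R2 × R2 × ZMod 2,
        z + t.1 • (gen 3 + gen 7) + t.2.1 • (UU • gen 2 + gen 4 + gen 0)
          + (Polynomial.C t.2.2) • gen 8 ∈ LinearMap.range D) ∧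
    -- V̲_0: max{ r : ∃ z ∈ H_r, U^n z ≠ 0 and U^n z ∉ Im Q for all n } = 1
    IsGreatest {r : ℤ | ∃ z : Fin 10 → R2, D z = 0 ∧ Homog gr r z ∧
      ∀ n : ℕ, UU ^ n • z ∉ LinearMap.range D ∧
        ¬ ∃ w : Fin 10 → R2, D w = 0 ∧ UU ^ n • z + Qm w ∈ LinearMap.range D}
      1 ∧
    (-(1 : ℚ) / 2) * (1 - 1) = 0 ∧
    -- V̄_0: max{ r : ∃ z ∈ H_r, U^n z ≠ 0 for all n, and U^m z ∈ Im Q for some m } = 2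
    IsGreatest {r : ℤ | ∃ z : Fin 10 → R2, D z = 0 ∧ Homog gr r z ∧
      (∀ n : ℕ, UU ^ n • z ∉ LinearMap.range D) ∧
      ∃ m : ℕ, ∃ w : Fin 10 → R2, D w = 0 ∧
        UU ^ m • z + Qm w ∈ LinearMap.range D} 2 ∧
    (-(1 : ℚ) / 2) * 2 = -1 := by
  have hcycA : D (gen 3 + gen 7) = 0 := by
    rw [D_eq_zero_iff]
    refine ⟨rfl, ?_, rfl, ?_⟩
    · show (0 : R2) + 0 = UU * ((0 : R2) + 0); ring
    · show (0 : R2) + 1 = ((0 : R2) + 0) + ((1 : R2) + 0) + UU * ((0 : R2) + 0); ring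
  have hcycB : D (UU • gen 2 + gen 4 + gen 0) = 0 := by
    rw [D_eq_zero_iff]
    refine ⟨?_, ?_, ?_, ?_⟩
    · show UU * (0 : R2) + 1 + 0 = UU * 0 + 0 + 1; ring
    · show UU * (1 : R2) + 0 + 0 = UU * (UU * 0 + 0 + 1); ring
    · show UU * (0 : R2) + 0 + 0 = UU * 0 + 0 + 0; ring
    · show UU * (0 : R2) + 0 + 0
        = (UU * (0 : R2) + 0 + 0) + (UU * (0 : R2) + 0 + 0) + UU * (UU * (0 : R2) + 0 + 0)
      ring
  have hcycC : D (gen 8) = 0 := by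
    rw [D_eq_zero_iff]
    refine ⟨rfl, ?_, rfl, ?_⟩
    · show (0 : R2) = UU * 0; ring
    · show (0 : R2) = 0 + 0 + UU * 0; ring
  have hHomA : Homog gr 2 (gen 3 + gen 7) := by
    intro i k hk
    fin_cases i <;>
      simp (config := { decide := true }) [gen_apply, Pi.add_apply, gr, Polynomial.coeff_one,
        v10_0, v10_1, v10_2, v10_3, v10_4, v10_5, v10_6, v10_7, v10_8, v10_9] at hk ⊢ <;>
      omega
  have hHomB : Homog gr 1 (UU • gen 2 + gen 4 + gen 0) := by
    intro i k hk
    fin_cases i <;>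
      simp (config := { decide := true }) [gen_apply, Pi.add_apply, Pi.smul_apply, smul_eq_mul,
        UU, Polynomial.coeff_one, Polynomial.coeff_X, gr,
        v10_0, v10_1, v10_2, v10_3, v10_4, v10_5, v10_6, v10_7, v10_8, v10_9] at hk ⊢ <;>
      omega
  have hHomC : Homog gr 1 (gen 8) := by
    intro i k hk
    fin_cases i <;>
      simp (config := { decide := true }) [gen_apply, gr, Polynomial.coeff_one,
        v10_0, v10_1, v10_2, v10_3, v10_4, v10_5, v10_6, v10_7, v10_8, v10_9] at hk ⊢ <;>
      omega
  have htor : UU • gen 8 ∈ LinearMap.range D := by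
    rw [mem_range_D]
    refine ⟨?_, ?_, ?_, ?_, ?_, ?_, ?_⟩
    · show UU * 0 = 0; ring
    · show UU * 0 = 0; ring
    · show UU * 0 = 0; ring
    · show UU * 0 = 0; ring
    · show UU * (0 : R2) = UU * 0; rfl
    · show UU * (0 : R2) = UU * 0 + UU * (UU * 0); ring
    · show (UU * 0 + UU * 1).coeff 0 = 0
      rw [mul_zero, zero_add, mul_one, UU, Polynomial.coeff_X_zero]
  have hUrel : UU • (gen 3 + gen 7) + Qm (UU • gen 2 + gen 4 + gen 0)
      ∈ LinearMap.range D := by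
    rw [QmB, mem_range_D]
    refine ⟨?_, ?_, ?_, ?_, ?_, ?_, ?_⟩
    · show UU * ((0 : R2) + 0) + 0 = 0; ring
    · show UU * ((0 : R2) + 0) + 0 = 0; ring
    · show UU * ((0 : R2) + 0) + 0 = 0; ring
    · show UU * ((0 : R2) + 1) + UU = 0; linear_combination UU * two_zero
    · show UU * ((0 : R2) + 0) + 1 = UU * ((0 : R2) + 0) + 1; rfl
    · show UU * ((1 : R2) + 0) + 0
        = UU * ((0 : R2) + 0) + 0 + UU * (UU * ((0 : R2) + 0) + 1)
      ring
    · show (UU * ((0 : R2) + 0) + 0 + (UU * ((0 : R2) + 0) + 0)).coeff 0 = 0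
      simp
  have hDD : D ∘ₗ D = 0 := by
    apply LinearMap.ext; intro z
    rw [LinearMap.comp_apply, D_apply z, D_apply, LinearMap.zero_apply]
    funext j
    fin_cases j
    · rfl
    · show UU * (0 : R2) + 0 = 0; ring
    · rfl
    · show (0 : R2) + UU * 0 = 0; ring
    · rfl
    · show (0 : R2) + 0 = 0; ring
    · show (UU * z 0 + z 2) + (z 2 + UU * z 4) + UU * (z 0 + z 4) + (0 : R2) = 0
      linear_combination (UU * z 0 + z 2 + UU * z 4) * two_zero
    · rfl
    · show (UU * z 0 + z 2) + (z 2 + UU * z 4) + (0 : R2) + UU * (z 0 + z 4) = 0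
      linear_combination (UU * z 0 + z 2 + UU * z 4) * two_zero
    · show (0 : R2) + 0 = 0; ring
  have hnB : ∀ n : ℕ, UU ^ n • (UU • gen 2 + gen 4 + gen 0) ∉ LinearMap.range D := by
    intro n hmem
    have h0 : UU ^ n * (UU * 0 + 0 + 1) = (0 : R2) := ((mem_range_D _).mp hmem).1
    exact pow_ne_zero n X_ne (by linear_combination h0)
  have hnA : ∀ n : ℕ, UU ^ n • (gen 3 + gen 7) ∉ LinearMap.range D := by
    intro n hmem
    have h3 : UU ^ n * ((1 : R2) + 0)
        = UU ^ n * ((0 : R2) + 0) + UU * (UU ^ n * ((0 : R2) + 0)) :=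
      ((mem_range_D _).mp hmem).2.2.2.2.2.1
    exact pow_ne_zero n X_ne (by linear_combination h3)
  have hnBQ : ∀ n : ℕ, ∀ w : Fin 10 → R2,
      UU ^ n • (UU • gen 2 + gen 4 + gen 0) + Qm w ∉ LinearMap.range D := by
    intro n w hmem
    rw [Qm_apply] at hmem
    have h0 : UU ^ n * (UU * 0 + 0 + 1) + 0 = (0 : R2) := ((mem_range_D _).mp hmem).1
    exact pow_ne_zero n X_ne (by linear_combination h0)
  have hEU : ∀ z : Fin 10 → R2, D z = 0 →
      ∃! t : R2 × R2 × ZMod 2,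
        z + t.1 • (gen 3 + gen 7) + t.2.1 • (UU • gen 2 + gen 4 + gen 0)
          + (Polynomial.C t.2.2) • gen 8 ∈ LinearMap.range D := by
    intro z hz
    rw [D_eq_zero_iff] at hz
    obtain ⟨h4, h2, h9, h7⟩ := hz
    refine ⟨⟨z 7, z 0, (z 6).coeff 0 + (z 8).coeff 0⟩, ?_, ?_⟩
    · show z + z 7 • (gen 3 + gen 7) + z 0 • (UU • gen 2 + gen 4 + gen 0)
        + (Polynomial.C ((z 6).coeff 0 + (z 8).coeff 0)) • gen 8 ∈ LinearMap.range D
      rw [E_coords, mem_range_D]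
      refine ⟨?_, ?_, ?_, ?_, ?_, ?_, ?_⟩
      · show z 0 + z 0 = 0; exact add_self' _
      · show z 2 + z 0 * UU = 0; linear_combination h2 + UU * z 0 * two_zero
      · show z 4 + z 0 = 0; linear_combination h4 + z 0 * two_zero
      · show z 7 + z 7 = 0; exact add_self' _
      · show z 9 = z 5; exact h9
      · show z 3 + z 7 = z 1 + UU * z 5; linear_combination h7 + z 3 * two_zero
      · show (z 6 + (z 8 + Polynomial.C ((z 6).coeff 0 + (z 8).coeff 0))).coeff 0 = 0
        rw [Polynomial.coeff_add, Polynomial.coeff_add, Polynomial.coeff_C, if_pos rfl]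
        linear_combination ((z 6).coeff 0 + (z 8).coeff 0) * two_zero'
    · rintro ⟨t1, t2, t3⟩ ht
      rw [E_coords, mem_range_D] at ht
      obtain ⟨c0, -, -, c7, -, -, c68⟩ := ht
      have c0' : z 0 + t2 = 0 := c0
      have c7' : z 7 + t1 = 0 := c7
      have c68' : (z 6 + (z 8 + Polynomial.C t3)).coeff 0 = 0 := c68
      rw [Polynomial.coeff_add, Polynomial.coeff_add, Polynomial.coeff_C, if_pos rfl] at c68'
      have e1 : t1 = z 7 := (add_eq _ _ c7').symm
      have e2 : t2 = z 0 := (add_eq _ _ c0').symm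
      have e3 : t3 = (z 6).coeff 0 + (z 8).coeff 0 := zmod2_solve _ _ _ c68'
      subst e1; subst e2; subst e3; rfl
  refine ⟨hDD, hcycA, hHomA, hcycB, hHomB, hcycC, hHomC, htor, hUrel, hEU, ?_,
    by norm_num, ?_, by norm_num⟩
  · -- IsGreatest for V̲
    constructor
    · exact ⟨UU • gen 2 + gen 4 + gen 0, hcycB, hHomB,
        fun n => ⟨hnB n, fun ⟨w, _, hmem⟩ => hnBQ n w hmem⟩⟩
    · intro r hr
      obtain ⟨z, hz, hH, hcond⟩ := hr
      by_contra hlt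
      push_neg at hlt
      rcases (by omega : r = 2 ∨ 3 ≤ r) with hr2 | hr3
      · subst hr2
        rw [D_eq_zero_iff] at hz
        obtain ⟨h4, h2, h9, h7⟩ := hz
        have key : ∀ i : Fin 10, (¬ ∃ k : ℕ, gr i - 2 * (k : ℤ) = 2) → z i = 0 := by
          intro i hgi
          by_contra hne
          obtain ⟨k, hk⟩ := poly_exists_coeff _ hne
          exact hgi ⟨k, hH i k hk⟩
        have g0 : z 0 = 0 := key 0 (by rintro ⟨k, hk⟩; norm_num [gr, v10_0] at hk; omega)
        have g2 : z 2 = 0 := key 2 (by rintro ⟨k, hk⟩; norm_num [gr, v10_2] at hk; omega)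
        have g4 : z 4 = 0 := key 4 (by rintro ⟨k, hk⟩; norm_num [gr, v10_4] at hk; omega)
        have g5 : z 5 = 0 := key 5 (by rintro ⟨k, hk⟩; norm_num [gr, v10_5] at hk; omega)
        have g6 : z 6 = 0 := key 6 (by rintro ⟨k, hk⟩; norm_num [gr, v10_6] at hk; omega)
        have g8 : z 8 = 0 := key 8 (by rintro ⟨k, hk⟩; norm_num [gr, v10_8] at hk; omega)
        have g9 : z 9 = 0 := key 9 (by rintro ⟨k, hk⟩; norm_num [gr, v10_9] at hk; omega)
        have keyC : ∀ i : Fin 10, gr i = 2 → z i = Polynomial.C ((z i).coeff 0) := by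
          intro i hgi
          apply Polynomial.ext; intro k
          rw [Polynomial.coeff_C]
          split
          · next hk0 => rw [hk0]
          · next hk0 =>
              by_contra hne
              have hx := hH i k hne
              rw [hgi] at hx
              omega
        have hz1 : z 1 = Polynomial.C ((z 1).coeff 0) := keyC 1 (by norm_num [gr, v10_1])
        have hz3 : z 3 = Polynomial.C ((z 3).coeff 0) := keyC 3 (by norm_num [gr, v10_3])
        have hz7 : z 7 = z 1 + z 3 := by rw [h7, g5, mul_zero, add_zero]
        by_cases hab : (z 1).coeff 0 = (z 3).coeff 0
        · have h13 : z 1 = z 3 := by rw [hz1, hz3, hab]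
          apply (hcond 0).1
          rw [pow_zero, one_smul, mem_range_D]
          refine ⟨g0, g2, g4, ?_, ?_, ?_, ?_⟩
          · rw [hz7, h13]; exact add_self' _
          · rw [g9, g5]
          · rw [h13, g5, mul_zero, add_zero]
          · rw [g6, g8]; simp
        · have hb : (z 3).coeff 0 = (z 1).coeff 0 + 1 := zmod2_ne _ _ hab
          refine (hcond 1).2 ⟨UU • gen 2 + gen 4 + gen 0, hcycB, ?_⟩
          rw [QmB, mem_range_D]
          have hz7' : z 7 = 1 := by
            rw [hz7, hz1, hz3, hb, ← Polynomial.C_add, zmod2_aa1, Polynomial.C_1]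
          refine ⟨?_, ?_, ?_, ?_, ?_, ?_, ?_⟩
          · show UU ^ 1 * z 0 + 0 = 0; rw [g0]; ring
          · show UU ^ 1 * z 2 + 0 = 0; rw [g2]; ring
          · show UU ^ 1 * z 4 + 0 = 0; rw [g4]; ring
          · show UU ^ 1 * z 7 + UU = 0
            rw [hz7']; linear_combination UU * two_zero
          · show UU ^ 1 * z 9 + 1 = UU ^ 1 * z 5 + 1; rw [g9, g5]
          · show UU ^ 1 * z 3 + 0 = UU ^ 1 * z 1 + 0 + UU * (UU ^ 1 * z 5 + 1)
            rw [hz3, hz1, hb, g5, Polynomial.C_add, Polynomial.C_1]; ring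
          · have e6 : (UU ^ 1 • z + (![0,0,0,0,0,1,0,UU,0,1] : Fin 10 → R2)) 6 = 0 := by
              show UU ^ 1 * z 6 + 0 = 0
              rw [g6]; ring
            have e8 : (UU ^ 1 • z + (![0,0,0,0,0,1,0,UU,0,1] : Fin 10 → R2)) 8 = 0 := by
              show UU ^ 1 * z 8 + 0 = 0
              rw [g8]; ring
            rw [e6, e8]
            simp
      · have hz0 : z = 0 := high_grading_zero r z hz hH hr3
        exact (hcond 0).1 (by rw [hz0, smul_zero]; exact Submodule.zero_mem _)
  · -- IsGreatest for V̄
    constructor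
    · refine ⟨gen 3 + gen 7, hcycA, hHomA, hnA, 1, UU • gen 2 + gen 4 + gen 0, hcycB, ?_⟩
      rw [pow_one]; exact hUrel
    · intro r hr
      obtain ⟨z, hz, hH, hn, -⟩ := hr
      by_contra hlt
      push_neg at hlt
      have hz0 : z = 0 := high_grading_zero r z hz hH (by omega)
      exact hn 0 (by rw [hz0, smul_zero]; exact Submodule.zero_mem _)
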